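/- Naimark dilation for a POVM: given positive semi-definite operators {E_μ}_{μ=1}^K on a finite-dimensional Hilbert space H_B with Σ_μ E_μ = 1_B, there exist a finite-dimensional Hilbert space H_C, a unit vector |0_C⟩ ∈ H_C, and mutually orthogonal projections {P_μ} on H_B ⊗ H_C with Σ_μ P_μ = 1 such that (1_B ⊗ ⟨0_C|) P_μ (1_B ⊗ |0_C⟩) = E_μ for all μ. -/

import Mathlib

open Matrix Kronecker Finset ComplexOrder

noncomputable section
open scoped Classical

namespace Matrix.PosSemidef
/-- The positive semidefinite square root (removed from Mathlib; old definition restored). -/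
def sqrt {n 𝕜 : Type*} [Fintype n] [DecidableEq n] [RCLike 𝕜] {A : Matrix n n 𝕜}
    (hA : A.PosSemidef) : Matrix n n 𝕜 :=
  hA.1.eigenvectorUnitary.1 * diagonal ((↑) ∘ Real.sqrt ∘ hA.1.eigenvalues) *
    (star hA.1.eigenvectorUnitary : Matrix n n 𝕜)
end Matrix.PosSemidef

/-- Square root of a matrix: the PSD square root if the matrix is PSD, else 0. -/
def mSqrt {m : Type*} [Fintype m] [DecidableEq m] (A : Matrix m m ℂ) : Matrix m m ℂ :=

  if h : A.PosSemidef then h.sqrt else 0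

/-- Operator absolute value `|A| = √(Aᴴ A)`. -/
def mAbs {m : Type*} [Fintype m] [DecidableEq m] (A : Matrix m m ℂ) : Matrix m m ℂ :=
  (Matrix.posSemidef_conjTranspose_mul_self A).sqrt

/-- Von Neumann entropy (base-2), via eigenvalues of a Hermitian matrix. -/
def vnEntropy {m : Type*} [Fintype m] [DecidableEq m] (ρ : Matrix m m ℂ) : ℝ :=
  if h : ρ.IsHermitian then -∑ i, (h.eigenvalues i) * Real.logb 2 (h.eigenvalues i) else 0

/-- Partial trace over the first tensor factor. -/
def ptraceA {m p : Type*} [Fintype m] [Fintype p] (X : Matrix (m × p) (m × p) ℂ) :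
    Matrix p p ℂ := Matrix.of fun a b => ∑ k, X (k, a) (k, b)

/-- Partial trace over the second tensor factor. -/
def ptraceB {m p : Type*} [Fintype m] [Fintype p] (X : Matrix (m × p) (m × p) ℂ) :
    Matrix m m ℂ := Matrix.of fun a b => ∑ k, X (a, k) (b, k)

/-- Fidelity `F(ρ,σ) = (Tr |√ρ √σ|)²`. -/
def fidelity {m : Type*} [Fintype m] [DecidableEq m] (ρ σ : Matrix m m ℂ) : ℝ :=
  ((mAbs (mSqrt ρ * mSqrt σ)).trace.re) ^ 2

/-! Factor each effect as `E μ = (B μ)ᴴ * B μ`. Stacking the `B μ` gives an isometry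
`V : H_B → H_B ⊗ ℂ^K`, because `Vᴴ * V = ∑ μ, E μ = 1`. Complete `V` to a unitary `U` whose column
at `(b, 0)` is the column `b` of `V`. Conjugating the coordinate projections `1 ⊗ |μ⟩⟨μ|` by `U`
gives a projective measurement, and its compression by `|0⟩` is `Vᴴ * (1 ⊗ |μ⟩⟨μ|) * V = E μ`. -/

structure IsProjectiveMeasurement {ι A : Type*} [Fintype ι] [Semiring A] [StarRing A]
    (P : ι → A) : Prop where
  isStarProjection : ∀ μ, IsStarProjection (P μ)
  mul_eq_zero_of_ne : Pairwise fun μ ν => P μ * P ν = 0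
  sum_eq_one : ∑ μ, P μ = 1

theorem IsProjectiveMeasurement.map {ι A B F : Type*} [Fintype ι] [Semiring A] [StarRing A]
    [Semiring B] [StarRing B] [FunLike F A B] [RingHomClass F A B] [StarHomClass F A B]
    {P : ι → A} (hP : IsProjectiveMeasurement P) (f : F) :
    IsProjectiveMeasurement fun μ => f (P μ) where
  isStarProjection μ := (hP.isStarProjection μ).map f
  mul_eq_zero_of_ne μ ν hμν := by
    dsimp only
    rw [← map_mul, hP.mul_eq_zero_of_ne hμν, map_zero]
  sum_eq_one := by rw [← map_sum, hP.sum_eq_one, map_one]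

theorem IsProjectiveMeasurement.star_mul_mul {ι A : Type*} [Fintype ι] [Semiring A] [StarRing A]
    {P : ι → A} (hP : IsProjectiveMeasurement P) {U : A} (hU : U ∈ unitary A) :
    IsProjectiveMeasurement fun μ => star U * P μ * U := by
  simpa using hP.map (Unitary.conjStarAlgAut ℕ A (star ⟨U, hU⟩))

namespace Matrix

variable {l m n ι α 𝕜 : Type*}

open scoped MatrixOrder Matrix.Norms.L2Operator in
theorem PosSemidef.exists_eq_conjTranspose_mul_self [RCLike 𝕜] [Fintype n] {A : Matrix n n 𝕜}
    (hA : A.PosSemidef) : ∃ B : Matrix n n 𝕜, A = Bᴴ * B := by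
  obtain ⟨B, rfl⟩ := CStarAlgebra.nonneg_iff_eq_star_mul_self.mp hA.nonneg
  exact ⟨B, rfl⟩

theorem isProjectiveMeasurement_diagonal_fiber [Fintype m] [DecidableEq m] [Fintype ι]
    [DecidableEq ι] [CommSemiring α] [StarRing α] (f : m → ι) :
    IsProjectiveMeasurement fun μ =>
      (diagonal fun p => if f p = μ then 1 else 0 : Matrix m m α) where
  isStarProjection μ := by
    refine ⟨?_, ?_⟩
    · rw [IsIdempotentElem, diagonal_mul_diagonal]
      congr 1; ext p; split_ifs <;> simp
    · rw [IsSelfAdjoint, star_eq_conjTranspose, diagonal_conjTranspose]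
      congr 1; ext p; rw [Pi.star_apply]; split_ifs <;> simp
  mul_eq_zero_of_ne μ ν hμν := by
    dsimp only
    rw [diagonal_mul_diagonal, ← diagonal_zero]
    congr 1; ext p; split_ifs <;> simp_all
  sum_eq_one := by
    ext p q
    rcases eq_or_ne p q with rfl | hpq
    · simp [sum_apply]
    · simp [sum_apply, hpq]

def stackRows (B : ι → Matrix l n α) : Matrix (l × ι) n α :=
  of fun p j => B p.2 p.1 j

theorem conjTranspose_stackRows_mul_diagonal_mul_stackRows [Fintype l] [Fintype ι]
    [DecidableEq l] [DecidableEq ι] [CommSemiring α] [StarRing α] (B : ι → Matrix l n α)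
    (d : ι → α) :
    (stackRows B)ᴴ * diagonal (fun p : l × ι => d p.2) * stackRows B =
      ∑ μ, d μ • ((B μ)ᴴ * B μ) := by
  ext j j'
  simp only [mul_apply (M := _ * _), mul_diagonal]
  simp only [conjTranspose_apply, stackRows, of_apply, sum_apply, smul_apply,
    Fintype.sum_prod_type, smul_eq_mul, mul_apply, Finset.mul_sum]
  rw [Finset.sum_comm]
  refine Finset.sum_congr rfl fun μ _ => Finset.sum_congr rfl fun k _ => ?_
  ring

theorem submatrix_conjTranspose_mul_mul [Fintype m] [NonUnitalNonAssocSemiring α] [StarRing α]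
    (A : Matrix m n α) (D : Matrix m m α) (f : l → n) :
    (Aᴴ * D * A).submatrix f f = (A.submatrix id f)ᴴ * D * A.submatrix id f := by
  rw [submatrix_mul _ _ _ id _ Function.bijective_id,
    submatrix_mul _ _ _ id _ Function.bijective_id, conjTranspose_submatrix, submatrix_id_id]

theorem exists_mem_unitaryGroup_submatrix_eq [RCLike 𝕜] [Fintype m] [DecidableEq m] [Fintype n]
    [DecidableEq n] {V : Matrix m n 𝕜} (hV : Vᴴ * V = 1) {f : n → m}
    (hf : Function.Injective f) :
    ∃ U ∈ unitaryGroup m 𝕜, U.submatrix id f = V := by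
  set w : n → EuclideanSpace 𝕜 m := fun j => WithLp.toLp 2 (Vᵀ j)
  have hw : Orthonormal 𝕜 w := by
    rw [orthonormal_iff_ite]
    intro j j'
    rw [EuclideanSpace.inner_toLp_toLp, ← one_apply, ← hV, mul_apply, dotProduct]
    simp [mul_comm]
  have hext : Orthonormal 𝕜 ((Set.range f).domRestrict (Function.extend f w 0)) := by
    convert hw.comp _ (Equiv.ofInjective f hf).symm.injective
    ext ⟨_, j, rfl⟩ : 1
    simp [hf.extend_apply]
  obtain ⟨b, hb⟩ := hext.exists_orthonormalBasis_extension_of_card_eq finrank_euclideanSpace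
  refine ⟨(EuclideanSpace.basisFun m 𝕜).toBasis.toMatrix b,
    (EuclideanSpace.basisFun m 𝕜).toMatrix_orthonormalBasis_mem_unitary b, ?_⟩
  ext i j
  simp [Module.Basis.toMatrix_apply, hb (f j) ⟨j, rfl⟩, hf.extend_apply, w]

theorem exists_isProjectiveMeasurement_submatrix_eq [RCLike 𝕜] [Fintype n] [DecidableEq n]
    [Fintype ι] [DecidableEq ι] {E : ι → Matrix n n 𝕜} (hE : ∀ μ, (E μ).PosSemidef)
    (hsum : ∑ μ, E μ = 1) (i₀ : ι) :
    ∃ P : ι → Matrix (n × ι) (n × ι) 𝕜,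
      IsProjectiveMeasurement P ∧ ∀ μ, (P μ).submatrix (·, i₀) (·, i₀) = E μ := by
  choose B hB using fun μ => (hE μ).exists_eq_conjTranspose_mul_self
  have hV : (stackRows B)ᴴ * stackRows B = 1 := by
    simpa [← hB, hsum] using conjTranspose_stackRows_mul_diagonal_mul_stackRows B 1
  obtain ⟨U, hU, hUV⟩ := exists_mem_unitaryGroup_submatrix_eq hV (Prod.mk_left_injective i₀)
  refine ⟨_, (isProjectiveMeasurement_diagonal_fiber Prod.snd).star_mul_mul hU, fun μ => ?_⟩
  rw [star_eq_conjTranspose, submatrix_conjTranspose_mul_mul, hUV,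
    conjTranspose_stackRows_mul_diagonal_mul_stackRows B fun ν => if ν = μ then 1 else 0]
  simp [hB]

end Matrix

/-- Naimark dilation of a POVM to a projective measurement on an enlarged space. -/
theorem stmt9 (dB K : ℕ) (E : Fin K → Matrix (Fin dB) (Fin dB) ℂ)
    (hE : ∀ μ, (E μ).PosSemidef) (hsum : ∑ μ, E μ = 1) :
    ∃ (dC : ℕ) (v : Fin dC → ℂ), star v ⬝ᵥ v = 1 ∧
      ∃ P : Fin K → Matrix (Fin dB × Fin dC) (Fin dB × Fin dC) ℂ,
        (∀ μ, (P μ)ᴴ = P μ) ∧ (∀ μ, P μ * P μ = P μ) ∧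
        (∀ μ ν, μ ≠ ν → P μ * P ν = 0) ∧ (∑ μ, P μ = 1) ∧
        (∀ μ, E μ = Matrix.of fun b b' : Fin dB =>
          ∑ c, ∑ c', (starRingEnd ℂ) (v c) * P μ (b, c) (b', c') * v c') := by
  cases K with
  | zero =>
    have : IsEmpty (Fin dB) := ⟨fun b => by simpa using congrFun (congrFun hsum b) b⟩
    exact ⟨1, 1, by simp, 0, by simp, by simp, by simp, Subsingleton.elim _ _, finZeroElim⟩
  | succ K =>
    obtain ⟨P, hP, hPE⟩ := exists_isProjectiveMeasurement_submatrix_eq hE hsum 0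
    refine ⟨K + 1, Pi.single 0 1, by simp, P, fun μ => (hP.isStarProjection μ).isSelfAdjoint,
      fun μ => (hP.isStarProjection μ).isIdempotentElem, fun _ _ h => hP.mul_eq_zero_of_ne h,
      hP.sum_eq_one, fun μ => ?_⟩
    rw [← hPE μ]
    ext b b'
    simp [Pi.single_apply]
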